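/- Under the Lazy Set axioms A0–A2, the relation <' = < ∪ ⇒ has no cycles: there is no finite sequence X₀ <' X₁ <' ⋯ <' Xₙ with X₀ = Xₙ and n ≥ 1. -/

import Mathlib

/-- Event type: Add, Rem, or Contains. -/
inductive EType | add | rem | cnt
deriving DecidableEq

/-- Status of an event: 0, 1, or f (failed). -/
inductive Status | s0 | s1 | sf
deriving DecidableEq

open EType Status

/-- A Tarskian system execution satisfying the Lazy Set axioms A0–A2.
Events are typed Add/Rem/Cnt; Add and Rem events are actions (with
Begin(E) = End(E) = E) and the actions are linearly ordered by the temporal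
precedence relation `lt`; Cnt events are high-level with Begin(E) < End(E);
`γ` is defined on the Op¹ events and satisfies axioms A1 and A2. -/
structure LazySys where
  E : Type
  lt : E → E → Prop
  typ : E → EType
  χ : E → Status
  kval : E → ℕ
  Begin : E → E
  End' : E → E
  γ : E → E
  action : E → Prop
  lt_irrefl : ∀ e, ¬ lt e e
  lt_trans : ∀ a b c, lt a b → lt b c → lt a c
  act_lin : ∀ a b, action a → action b → a ≠ b → lt a b ∨ lt b a
  addRem_action : ∀ e, typ e ≠ EType.cnt →
    action e ∧ Begin e = e ∧ End' e = e
  begin_end_action : ∀ e, action (Begin e) ∧ action (End' e)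
  cnt_interval : ∀ e, typ e = EType.cnt → lt (Begin e) (End' e)
  lt_iff : ∀ a b, lt a b ↔ lt (End' a) (Begin b)
  A1 : ∀ A, χ A = Status.s1 →
    typ (γ A) = EType.add ∧ χ (γ A) = Status.s0 ∧ kval (γ A) = kval A ∧
    lt (γ A) (End' A) ∧
    ¬ ∃ R, typ R = EType.rem ∧ χ R = Status.s1 ∧ γ R = γ A ∧
      lt (γ A) R ∧ lt R A
  A2 : ∀ A B, typ A = EType.add → χ A = Status.s0 → χ B = Status.s0 →
    lt A B → kval A = kval B →
    ∃ R, typ R = EType.rem ∧ χ R = Status.s1 ∧ γ R = A ∧ lt R (End' B)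

/-- The auxiliary relation ⇒ used in the linearization proof. -/
def LazySys.arrow (S : LazySys) (X Y : S.E) : Prop :=
  (S.typ Y = EType.cnt ∧ S.χ Y = Status.s1 ∧ X = S.γ Y) ∨
  (S.typ X = EType.cnt ∧ S.χ X = Status.s1 ∧
    S.typ Y = EType.rem ∧ S.χ Y = Status.s1 ∧ S.γ Y = S.γ X) ∨
  (S.typ X = EType.rem ∧ S.χ X = Status.s1 ∧
    S.typ Y = EType.cnt ∧ S.χ Y = Status.s0 ∧
    S.kval X = S.kval Y ∧ ¬ S.lt Y X ∧ S.lt (S.γ X) Y) ∨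
  (S.typ X = EType.cnt ∧ S.χ X = Status.s0 ∧
    S.typ Y = EType.add ∧ S.χ Y = Status.s0 ∧
    S.kval X = S.kval Y ∧ ¬ S.lt Y X)

/-- The union relation <' = < ∪ ⇒. -/
def LazySys.lt' (S : LazySys) (X Y : S.E) : Prop :=
  S.lt X Y ∨ S.arrow X Y

/-!
Every `⇒`-edge either leaves an action (Add/Rem) and enters a Cnt, or leaves a Cnt and enters
an action. An edge leaving an action composes with the `<'`-edge after it into a `<`-edge
(by A1 for `γ(C) ⇒ C ⇒ R`, by A2 for `R ⇒ C ⇒ A`), and an edge leaving a Cnt composes with the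
`<'`-edge before it. So among any four consecutive `<'`-edges two adjacent ones can be replaced
by a single `<`-edge, which shortens every cycle of length at least two; a cycle of length one
is ruled out by irreflexivity.
-/

section Cycle

variable {α : Type*} {r : α → α → Prop}

theorem rel_mod_of_cycle {n : ℕ} {X : ℕ → α} (hn : 0 < n)
    (hX : ∀ i < n, r (X i) (X (i + 1))) (hcyc : X 0 = X n) (i : ℕ) :
    r (X (i % n)) (X ((i + 1) % n)) := by
  have hi : i % n < n := Nat.mod_lt i hn
  have hstep := hX _ hi
  rw [← Nat.mod_add_mod]
  rcases (show i % n + 1 ≤ n from hi).lt_or_eq with h | h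
  · rwa [Nat.mod_eq_of_lt h]
  · rw [h, Nat.mod_self, hcyc]
    rwa [h] at hstep

theorem exists_cycle_of_shortcut {n : ℕ} {X : ℕ → α} (hX : ∀ i, r (X i) (X (i + 1)))
    (hper : Function.Periodic X n) {i : ℕ} (hi : r (X i) (X (i + 2))) :
    ∃ Y : ℕ → α, (∀ k < n - 1, r (Y k) (Y (k + 1))) ∧ Y 0 = Y (n - 1) := by
  -- The shortened cycle is `X i, X (i + 2), X (i + 3), …, X (i + n) = X i`.
  refine ⟨fun k => if k = 0 then X i else X (i + 1 + k), fun k _ => ?_, ?_⟩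
  · rcases k with _ | k
    · simpa using hi
    · simpa [add_assoc] using hX (i + 1 + (k + 1))
  · rcases n with _ | _ | n
    · rfl
    · rfl
    · simp [show i + 1 + (n + 1) = i + (n + 2) by omega, hper i]

theorem not_exists_cycle_of_shortcut (hirr : ∀ a, ¬ r a a)
    (hshort : ∀ a b c d e, r a b → r b c → r c d → r d e → r a c ∨ r b d ∨ r c e) :
    ¬ ∃ (n : ℕ) (X : ℕ → α), 1 ≤ n ∧ (∀ i < n, r (X i) (X (i + 1))) ∧ X 0 = X n := by
  rintro ⟨n, X, hn, hX, hcyc⟩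
  induction n using Nat.strong_induction_on generalizing X with
  | _ n ih =>
  obtain rfl | hn2 := hn.eq_or_lt
  · exact hirr (X 1) (hcyc ▸ hX 0 zero_lt_one)
  set Y : ℕ → α := fun i => X (i % n)
  have hY : ∀ i, r (Y i) (Y (i + 1)) := rel_mod_of_cycle hn hX hcyc
  have hper : Function.Periodic Y n := (Nat.periodic_mod n).comp X
  -- `Y` runs around the cycle forever, so four consecutive edges exist even when `n < 4`.
  obtain ⟨i, hi⟩ : ∃ i, r (Y i) (Y (i + 2)) := by
    rcases hshort _ _ _ _ _ (hY 0) (hY 1) (hY 2) (hY 3) with h | h | h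
    exacts [⟨0, h⟩, ⟨1, h⟩, ⟨2, h⟩]
  obtain ⟨Z, hZ, hZcyc⟩ := exists_cycle_of_shortcut hY hper hi
  exact ih (n - 1) (by omega) Z (by omega) hZ hZcyc

end Cycle

namespace LazySys

variable {S : LazySys} {R A W X Y Z U : S.E}

theorem action_of_ne_cnt (h : S.typ X ≠ cnt) : S.action X := (S.addRem_action X h).1

theorem begin_eq_of_ne_cnt (h : S.typ X ≠ cnt) : S.Begin X = X := (S.addRem_action X h).2.1

theorem end_eq_of_ne_cnt (h : S.typ X ≠ cnt) : S.End' X = X := (S.addRem_action X h).2.2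

theorem eq_or_lt_of_not_lt (hX : S.action X) (hY : S.action Y) (h : ¬ S.lt X Y) :
    X = Y ∨ S.lt Y X :=
  or_iff_not_imp_left.2 fun hne => (S.act_lin X Y hX hY hne).resolve_left h

theorem lt_of_lt_of_not_lt (hXY : S.lt X Y) (hZY : ¬ S.lt Z Y) (hZ : S.typ Z ≠ cnt) :
    S.lt X Z := by
  rw [S.lt_iff] at hXY hZY ⊢
  rw [end_eq_of_ne_cnt hZ] at hZY
  rw [begin_eq_of_ne_cnt hZ]
  rcases eq_or_lt_of_not_lt (action_of_ne_cnt hZ) (S.begin_end_action Y).1 hZY with h | h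
  · exact h ▸ hXY
  · exact S.lt_trans _ _ _ hXY h

theorem lt_of_not_lt_of_lt (hYX : ¬ S.lt Y X) (hYZ : S.lt Y Z) (hX : S.typ X ≠ cnt) :
    S.lt X Z := by
  rw [S.lt_iff] at hYX hYZ ⊢
  rw [begin_eq_of_ne_cnt hX] at hYX
  rw [end_eq_of_ne_cnt hX]
  rcases eq_or_lt_of_not_lt (S.begin_end_action Y).2 (action_of_ne_cnt hX) hYX with h | h
  · exact h ▸ hYZ
  · exact S.lt_trans _ _ _ h hYZ

theorem typ_gamma (h : S.χ X = s1) : S.typ (S.γ X) = add := (S.A1 X h).1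

theorem gamma_lt_of_rem (hR : S.typ R = rem) (hRχ : S.χ R = s1) : S.lt (S.γ R) R := by
  have hR' : S.typ R ≠ cnt := by simp [hR]
  simpa only [end_eq_of_ne_cnt hR'] using (S.A1 R hRχ).2.2.2.1

theorem lt_end_of_gamma_lt (hR : S.typ R = rem) (hRχ : S.χ R = s1) (hAχ : S.χ A = s0)
    (hk : S.kval R = S.kval A) (hgA : S.lt (S.γ R) A) : S.lt R (S.End' A) := by
  obtain ⟨hgt, hgχ, hgk, -, hno⟩ := S.A1 R hRχ
  obtain ⟨R', hR't, hR'χ, hγ, hR'A⟩ := S.A2 (S.γ R) A hgt hgχ hAχ hgA (hgk.trans hk)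
  have hgR' : S.lt (S.γ R) R' := hγ ▸ gamma_lt_of_rem hR't hR'χ
  have hR'R : ¬ S.lt R' R := fun h => hno ⟨R', hR't, hR'χ, hγ, hgR', h⟩
  rcases eq_or_lt_of_not_lt (action_of_ne_cnt (by simp [hR't])) (action_of_ne_cnt (by simp [hR]))
    hR'R with rfl | h
  · exact hR'A
  · exact S.lt_trans _ _ _ h hR'A

theorem arrow_typ_cnt_iff (h : S.arrow X Y) : S.typ X = cnt ↔ S.typ Y ≠ cnt := by
  rcases h with ⟨hY, hYχ, rfl⟩ | ⟨hX, -, hY, -⟩ | ⟨hX, -, hY, -⟩ | ⟨hX, -, hY, -⟩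
  · simp [hY, typ_gamma hYχ]
  all_goals simp [hX, hY]

theorem not_lt_of_arrow (h : S.arrow X Y) : ¬ S.lt Y X := by
  rcases h with ⟨-, hYχ, rfl⟩ | ⟨-, hXχ, hYt, hYχ, hγ⟩ | ⟨-, -, -, -, -, h, -⟩ | ⟨-, -, -, -, -, h⟩
  · intro hlt
    rw [S.lt_iff, begin_eq_of_ne_cnt (by simp [typ_gamma hYχ])] at hlt
    exact S.lt_irrefl _ (S.lt_trans _ _ _ (S.A1 Y hYχ).2.2.2.1 hlt)
  · exact fun hlt => (S.A1 X hXχ).2.2.2.2 ⟨Y, hYt, hYχ, hγ, hγ ▸ gamma_lt_of_rem hYt hYχ, hlt⟩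
  · exact h
  · exact h

theorem lt_of_arrow_of_arrow (hX : S.typ X ≠ cnt) (hXY : S.arrow X Y) (hYZ : S.arrow Y Z) :
    S.lt X Z := by
  rcases hXY with ⟨hYt, hYχ, rfl⟩ | ⟨hXt, -⟩ | ⟨hXt, hXχ, hYt, hYχ, hk, -, hgY⟩ | ⟨hXt, -⟩
  · rcases hYZ with ⟨-, hZχ, rfl⟩ | ⟨-, -, hZt, hZχ, hγ⟩ | ⟨hYt', -⟩ | ⟨-, hYχ', -⟩
    · simp [typ_gamma hZχ] at hYt
    · exact hγ ▸ gamma_lt_of_rem hZt hZχ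
    · simp [hYt] at hYt'
    · simp [hYχ] at hYχ'
  · exact absurd hXt hX
  · rcases hYZ with ⟨-, hZχ, rfl⟩ | ⟨-, hYχ', -⟩ | ⟨hYt', -⟩ | ⟨-, -, hZt, hZχ, hk', hZY⟩
    · simp [typ_gamma hZχ] at hYt
    · simp [hYχ] at hYχ'
    · simp [hYt] at hYt'
    · have hZ : S.typ Z ≠ cnt := by simp [hZt]
      simpa only [end_eq_of_ne_cnt hZ] using lt_end_of_gamma_lt hXt hXχ hZχ (hk.trans hk')
        (lt_of_lt_of_not_lt hgY hZY hZ)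
  · exact absurd hXt hX

theorem lt_of_arrow_of_lt' (hX : S.typ X ≠ cnt) (hXY : S.arrow X Y) (hYZ : S.lt' Y Z) :
    S.lt X Z :=
  hYZ.elim (lt_of_not_lt_of_lt (not_lt_of_arrow hXY) · hX) (lt_of_arrow_of_arrow hX hXY)

theorem lt_of_lt'_of_arrow (hX : S.typ X = cnt) (hWX : S.lt' W X) (hXY : S.arrow X Y) :
    S.lt W Y := by
  rcases hWX with h | h
  · exact lt_of_lt_of_not_lt h (not_lt_of_arrow hXY) ((arrow_typ_cnt_iff hXY).1 hX)
  · exact lt_of_arrow_of_lt' (fun hW => (arrow_typ_cnt_iff h).1 hW hX) h (Or.inr hXY)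

theorem lt_or_lt_of_arrow (hWX : S.lt' W X) (hXY : S.arrow X Y) (hYZ : S.lt' Y Z) :
    S.lt W Y ∨ S.lt X Z := by
  by_cases hX : S.typ X = cnt
  · exact Or.inl (lt_of_lt'_of_arrow hX hWX hXY)
  · exact Or.inr (lt_of_arrow_of_lt' hX hXY hYZ)

theorem lt_or_lt_or_lt_of_lt' (hWX : S.lt' W X) (hXY : S.lt' X Y) (hYZ : S.lt' Y Z)
    (hZU : S.lt' Z U) : S.lt W Y ∨ S.lt X Z ∨ S.lt Y U := by
  rcases hXY with hXY | hXY
  · rcases hYZ with hYZ | hYZ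
    · exact Or.inr (Or.inl (S.lt_trans _ _ _ hXY hYZ))
    · exact Or.inr (lt_or_lt_of_arrow (Or.inl hXY) hYZ hZU)
  · exact (lt_or_lt_of_arrow hWX hXY hYZ).imp_right Or.inl

theorem lt'_irrefl (X : S.E) : ¬ S.lt' X X :=
  fun h => h.elim (S.lt_irrefl X) fun h => iff_not_self (arrow_typ_cnt_iff h)

end LazySys

/-- Under the Lazy Set axioms A0–A2, the relation
<' = < ∪ ⇒ has no cycles: there is no finite sequence
X₀ <' X₁ <' ⋯ <' Xₙ with X₀ = Xₙ and n ≥ 1. -/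
theorem stmt10 (S : LazySys) :
    ¬ ∃ (n : ℕ) (X : ℕ → S.E), 1 ≤ n ∧
      (∀ i < n, S.lt' (X i) (X (i + 1))) ∧ X 0 = X n :=
  not_exists_cycle_of_shortcut S.lt'_irrefl fun _ _ _ _ _ hab hbc hcd hde =>
    (S.lt_or_lt_or_lt_of_lt' hab hbc hcd hde).imp Or.inl (Or.imp Or.inl Or.inl)
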